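/- arXiv:1412.4994 — 10 statements merged into one kernel-verified Lean document; each statement's English description precedes it below -/
import Mathlib

section
/- For every k ≥ 3, every finite simple graph G on vertex set {1,…,n} is 1^k-representable: there exists a word w over the alphabet {1,…,n} in which every vertex occurs, such that for all distinct x,y, xy is an edge of G if and only if the subword of w restricted to letters {x,y} contains no k consecutive equal letters. -/
/-!
Fix an enumeration `V` of the vertices and, for every ordered non-edge `(a, b)`, the block
`B(a,b) = b (a V')^(k-1) a b`, where `V'` is `V` without `a` and `b`; the word is
`w = V B₁ V B₂ V ⋯ B_m V`. Restricted to `{a, b}` the block reads `b a^k b`.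
For any other pair, listed as `c d` in `V`, the restriction of `w` is `c P₁ P₂ ⋯ P_m d` with pieces
`Pᵢ = d (Bᵢ restricted) c`. Adjacent pieces meet at a change of letter, so every run lies inside
`c`, `d` or a single piece, and each piece is one of `d(cd)^(k-1)c`, `d(cd)^(k-1)cc`,
`dd(cd)^(k-1)c`, `dcd^(k-1)cc`, `ddc^(k-1)dc`, none of which has a run of length `k ≥ 3`.
-/

/-- A word has a `1^k`-match if it contains `k` consecutive equal letters. -/
def HasPowMatch {α : Type*} (k : ℕ) (w : List α) : Prop :=
  ∃ z : α, List.replicate k z <:+: w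

open List

section PowMatch

variable {α : Type*} {k m : ℕ} {u v w : List α}

theorem HasPowMatch.of_infix (h : HasPowMatch k u) (huv : u <:+: v) : HasPowMatch k v :=
  let ⟨z, hz⟩ := h
  ⟨z, hz.trans huv⟩

theorem not_hasPowMatch_replicate (h : m < k) (z : α) : ¬HasPowMatch k (replicate m z) := by
  rintro ⟨y, hy⟩
  have := hy.length_le
  simp only [length_replicate] at this
  omega

theorem not_hasPowMatch_of_isChain_ne (hk : 2 ≤ k) (hw : w.IsChain (· ≠ ·)) :
    ¬HasPowMatch k w := by
  rintro ⟨z, hz⟩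
  have hzz : [z, z] <:+: replicate k z := infix_replicate_iff.2 ⟨by simpa using hk, rfl⟩
  simpa using hw.infix (hzz.trans hz)

theorem hasPowMatch_append_iff (h : u.getLast? ≠ v.head?) :
    HasPowMatch k (u ++ v) ↔ HasPowMatch k u ∨ HasPowMatch k v := by
  refine ⟨fun ⟨z, hz⟩ => ?_, ?_⟩
  · rcases infix_append_iff_ne_nil.1 hz with hu | hv | ⟨s, t, hs, ht, hst, ⟨u', rfl⟩, ⟨v', rfl⟩⟩
    · exact .inl ⟨z, hu⟩
    · exact .inr ⟨z, hv⟩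
    · obtain ⟨-, hs', ht'⟩ := replicate_eq_append_iff.1 hst
      refine absurd ?_ h
      rw [getLast?_append_of_ne_nil _ hs, head?_append_of_ne_nil _ ht, hs', ht',
        getLast?_replicate, head?_replicate]
      simp [hs, ht]
  · rintro (h | h)
    · exact h.of_infix infix_append_left
    · exact h.of_infix infix_append_right

theorem not_hasPowMatch_append (h : u.getLast? ≠ v.head?) (hu : ¬HasPowMatch k u)
    (hv : ¬HasPowMatch k v) : ¬HasPowMatch k (u ++ v) := by
  rw [hasPowMatch_append_iff h]
  tauto

theorem not_hasPowMatch_cons_flatMap_append {β : Type*} {c d : α} (hk : 2 ≤ k) (hcd : c ≠ d)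
    (f : β → List α) (L : List β) (h : ∀ i ∈ L, ¬HasPowMatch k (d :: f i ++ [c])) :
    ¬HasPowMatch k (c :: (L.flatMap (fun i => d :: f i ++ [c]) ++ [d])) := by
  have hhead : ∀ L' : List β, (L'.flatMap (fun i => d :: f i ++ [c]) ++ [d]).head? = some d := by
    intro L'; cases L' <;> simp
  have hsuffix : ¬HasPowMatch k (L.flatMap (fun i => d :: f i ++ [c]) ++ [d]) := by
    induction L with
    | nil => exact not_hasPowMatch_replicate (m := 1) (by omega) d
    | cons i L ih =>
      rw [flatMap_cons, append_assoc (d :: f i ++ [c])]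
      exact not_hasPowMatch_append (by rw [hhead]; simp [getLast?_cons, hcd]) (h i mem_cons_self)
        (ih fun j hj => h j (mem_cons_of_mem i hj))
  rw [← singleton_append]
  exact not_hasPowMatch_append (by rw [hhead]; simp [hcd])
    (not_hasPowMatch_replicate (m := 1) (by omega) c) hsuffix

end PowMatch

theorem isChain_ne_flatten_replicate {α : Type*} {c d : α} (hcd : c ≠ d) (n : ℕ) :
    (replicate n [c, d]).flatten.IsChain (· ≠ ·) :=
  (isChain_flatten (by simp)).2
    ⟨by simp [hcd], isChain_replicate_of_rel n (by simpa using hcd.symm)⟩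

theorem append_flatMap_append_comm {α β : Type*} (v : List α) (g : β → List α) (L : List β) :
    v ++ L.flatMap (fun i => g i ++ v) = L.flatMap (fun i => v ++ g i) ++ v := by
  induction L with
  | nil => simp
  | cons i L ih => simp [ih]

section Construction

variable {α : Type*} [DecidableEq α] {k : ℕ}

def nonEdgeBlock (k : ℕ) (V : List α) (a b : α) : List α :=
  b :: (replicate (k - 1) (a :: V.filter fun u => u ≠ a ∧ u ≠ b)).flatten ++ [a, b]

def representingWord (k : ℕ) (V : List α) (L : List (α × α)) : List α :=
  V ++ L.flatMap fun e => nonEdgeBlock k V e.1 e.2 ++ V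

theorem filter_nonEdgeBlock (p : α → Bool) (k : ℕ) (V : List α) (a b : α) :
    (nonEdgeBlock k V a b).filter p = [b].filter p ++
      (replicate (k - 1) ([a].filter p ++ (V.filter p).filter fun u => u ≠ a ∧ u ≠ b)).flatten ++
      [a, b].filter p := by
  unfold nonEdgeBlock
  cases ha : p a <;> cases hb : p b <;> simp [filter_flatten, ha, hb, Bool.and_comm]

theorem hasPowMatch_filter_nonEdgeBlock (hk : 1 ≤ k) {p : α → Bool} {V : List α} {a b : α}
    (ha : p a) (hb : p b) (hV : ∀ u ∈ V, p u → u = a ∨ u = b) :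
    HasPowMatch k ((nonEdgeBlock k V a b).filter p) := by
  have hrest : (V.filter p).filter (fun u => u ≠ a ∧ u ≠ b) = [] := by
    simp only [filter_filter, filter_eq_nil_iff, Bool.and_eq_true, decide_eq_true_eq]
    exact fun u hu ⟨⟨hua, hub⟩, hpu⟩ => (hV u hu hpu).elim hua hub
  obtain ⟨j, rfl⟩ : ∃ j, k = j + 1 := ⟨k - 1, by omega⟩
  refine ⟨a, [b], [b], ?_⟩
  rw [filter_nonEdgeBlock, hrest]
  simp [ha, hb, replicate_succ']

theorem not_hasPowMatch_cons_filter_nonEdgeBlock_append_of_fst_mem (hk : 3 ≤ k)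
    {p : α → Bool} {V : List α} {a b c d : α} (hp : ∀ u, p u ↔ u = c ∨ u = d) (hcd : c ≠ d)
    (hV : V.filter p = [c, d]) (ha : a = c ∨ a = d) (hbc : b ≠ c) (hbd : b ≠ d) :
    ¬HasPowMatch k (d :: (nonEdgeBlock k V a b).filter p ++ [c]) := by
  obtain ⟨m, rfl⟩ : ∃ m, k = m + 3 := ⟨k - 3, by omega⟩
  have hk2 : 2 ≤ m + 3 := by omega
  have hdc := hcd.symm
  rcases ha.imp Eq.symm Eq.symm with rfl | rfl
  · have hpiece : d :: (nonEdgeBlock (m + 3) V c b).filter p ++ [c] =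
        (d :: (replicate (m + 2) [c, d]).flatten) ++ [c, c] := by
      simp [filter_nonEdgeBlock, hV, hp, hcd, hdc, hbc, hbc.symm, hbd, hbd.symm]
    rw [hpiece]
    refine not_hasPowMatch_append (by simp [getLast?_cons, getLast?_flatten_replicate, hdc]) ?_
      (not_hasPowMatch_replicate (m := 2) (by omega) c)
    exact not_hasPowMatch_of_isChain_ne hk2 (by
      simp [isChain_cons, isChain_ne_flatten_replicate hcd, head?_flatten_replicate, hdc])
  · have hpiece : d :: (nonEdgeBlock (m + 3) V d b).filter p ++ [c] =
        [d, d] ++ (c :: (replicate (m + 1) [d, c]).flatten ++ [d, c]) := by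
      simp [filter_nonEdgeBlock, hV, hp, hcd, hdc, hbc, hbc.symm, hbd, hbd.symm, replicate_succ]
    rw [hpiece]
    refine not_hasPowMatch_append (by simp [hdc]) (not_hasPowMatch_replicate (m := 2) (by omega) d)
      (not_hasPowMatch_of_isChain_ne hk2 ?_)
    simp [isChain_cons, isChain_append, isChain_ne_flatten_replicate hdc, head?_flatten_replicate,
      getLast?_flatten_replicate, hcd, hdc]

theorem not_hasPowMatch_cons_filter_nonEdgeBlock_append_of_snd_mem (hk : 3 ≤ k)
    {p : α → Bool} {V : List α} {a b c d : α} (hp : ∀ u, p u ↔ u = c ∨ u = d) (hcd : c ≠ d)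
    (hV : V.filter p = [c, d]) (hb : b = c ∨ b = d) (hac : a ≠ c) (had : a ≠ d) :
    ¬HasPowMatch k (d :: (nonEdgeBlock k V a b).filter p ++ [c]) := by
  obtain ⟨m, rfl⟩ : ∃ m, k = m + 3 := ⟨k - 3, by omega⟩
  have hk2 : 2 ≤ m + 3 := by omega
  have hrun : ∀ {n} (z : α), n < m + 3 → ¬HasPowMatch (m + 3) (replicate n z) :=
    fun z h => not_hasPowMatch_replicate h z
  have hdc := hcd.symm
  rcases hb.imp Eq.symm Eq.symm with rfl | rfl
  · have hpiece : d :: (nonEdgeBlock (m + 3) V a c).filter p ++ [c] =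
        [d, c] ++ (replicate (m + 2) d ++ [c, c]) := by
      simp [filter_nonEdgeBlock, hV, hp, hcd, hdc, hac, hac.symm, had, had.symm]
    rw [hpiece]
    refine not_hasPowMatch_append (by simp [head?_replicate, hcd])
      (not_hasPowMatch_of_isChain_ne hk2 (by simp [hdc])) ?_
    exact not_hasPowMatch_append (by simp [getLast?_replicate, hdc]) (hrun d (by omega))
      (hrun (n := 2) c (by omega))
  · have hpiece : d :: (nonEdgeBlock (m + 3) V a d).filter p ++ [c] =
        [d, d] ++ (replicate (m + 2) c ++ [d, c]) := by
      simp [filter_nonEdgeBlock, hV, hp, hcd, hdc, hac, hac.symm, had, had.symm]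
    rw [hpiece]
    refine not_hasPowMatch_append (by simp [head?_replicate, hdc]) (hrun (n := 2) d (by omega)) ?_
    exact not_hasPowMatch_append (by simp [getLast?_replicate, hcd]) (hrun c (by omega))
      (not_hasPowMatch_of_isChain_ne hk2 (by simp [hdc]))

theorem not_hasPowMatch_cons_filter_nonEdgeBlock_append (hk : 3 ≤ k) {p : α → Bool}
    {V : List α} {a b c d : α} (hp : ∀ u, p u ↔ u = c ∨ u = d) (hcd : c ≠ d)
    (hV : V.filter p = [c, d]) (hab : a ≠ b) (h₁ : (a, b) ≠ (c, d)) (h₂ : (a, b) ≠ (d, c)) :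
    ¬HasPowMatch k (d :: (nonEdgeBlock k V a b).filter p ++ [c]) := by
  by_cases ha : a = c ∨ a = d
  · refine not_hasPowMatch_cons_filter_nonEdgeBlock_append_of_fst_mem hk hp hcd hV ha ?_ ?_ <;>
      rintro rfl <;> rcases ha with rfl | rfl <;> simp_all
  by_cases hb : b = c ∨ b = d
  · exact not_hasPowMatch_cons_filter_nonEdgeBlock_append_of_snd_mem hk hp hcd hV hb
      (fun h => ha (.inl h)) (fun h => ha (.inr h))
  obtain ⟨hac, had⟩ : a ≠ c ∧ a ≠ d := not_or.1 ha
  obtain ⟨hbc, hbd⟩ : b ≠ c ∧ b ≠ d := not_or.1 hb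
  obtain ⟨m, rfl⟩ : ∃ m, k = m + 2 := ⟨k - 2, by omega⟩
  have hpiece : d :: (nonEdgeBlock (m + 2) V a b).filter p ++ [c] =
      d :: (replicate (m + 1) [c, d]).flatten ++ [c] := by
    simp [filter_nonEdgeBlock, hV, hp, hac, hac.symm, had, had.symm, hbc, hbc.symm, hbd, hbd.symm]
  rw [hpiece]
  refine not_hasPowMatch_of_isChain_ne (by omega) ?_
  simp [isChain_cons, isChain_append, isChain_ne_flatten_replicate hcd, head?_flatten_replicate,
    getLast?_flatten_replicate, hcd.symm]

theorem nonEdgeBlock_infix_representingWord {V : List α} {L : List (α × α)} {e : α × α}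
    (he : e ∈ L) : nonEdgeBlock k V e.1 e.2 <:+: representingWord k V L :=
  infix_append_left.trans <|
    (infix_of_mem_flatten (mem_map_of_mem (f := fun e => nonEdgeBlock k V e.1 e.2 ++ V) he)).trans
      infix_append_right

theorem filter_representingWord {V : List α} {L : List (α × α)} {c d : α} (p : α → Bool)
    (hV : V.filter p = [c, d]) :
    (representingWord k V L).filter p =
      c :: (L.flatMap (fun e => d :: (nonEdgeBlock k V e.1 e.2).filter p ++ [c]) ++ [d]) := by
  have := append_flatMap_append_comm [d] (fun e => (nonEdgeBlock k V e.1 e.2).filter p ++ [c]) L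
  simp only [representingWord, filter_append, filter_flatMap, hV]
  simpa using congrArg (c :: ·) this

theorem hasPowMatch_filter_representingWord_iff (hk : 3 ≤ k) {V : List α} {L : List (α × α)}
    {c d : α} (hcd : c ≠ d) (hV : V.filter (fun u => u = c ∨ u = d) = [c, d])
    (hL : ∀ e ∈ L, e.1 ≠ e.2) :
    HasPowMatch k ((representingWord k V L).filter (fun u => u = c ∨ u = d)) ↔
      (c, d) ∈ L ∨ (d, c) ∈ L := by
  constructor
  · contrapose!
    rintro ⟨hcdL, hdcL⟩
    rw [filter_representingWord _ hV]
    refine not_hasPowMatch_cons_flatMap_append (by omega) hcd _ L fun e he => ?_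
    exact not_hasPowMatch_cons_filter_nonEdgeBlock_append hk (by simp) hcd hV (hL e he)
      (fun h => hcdL (h ▸ he)) (fun h => hdcL (h ▸ he))
  · rintro (he | he) <;>
      refine (hasPowMatch_filter_nonEdgeBlock (by omega) ?_ ?_ ?_).of_infix
        ((nonEdgeBlock_infix_representingWord he).filter _) <;>
      simp +contextual [or_comm]

end Construction

theorem SimpleGraph.exists_word_adj_iff_not_hasPowMatch {α : Type*} [Fintype α] [DecidableEq α]
    (G : SimpleGraph α) {k : ℕ} (hk : 3 ≤ k) :
    ∃ w : List α, (∀ v, v ∈ w) ∧ ∀ x y, x ≠ y →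
      (G.Adj x y ↔ ¬HasPowMatch k (w.filter (fun a => a = x ∨ a = y))) := by
  classical
  let V := (Finset.univ : Finset α).toList
  let L := (Finset.univ.filter fun e : α × α => e.1 ≠ e.2 ∧ ¬G.Adj e.1 e.2).toList
  have hL : ∀ e ∈ L, e.1 ≠ e.2 := by simp +contextual [L]
  have hmem : ∀ {a b}, (a, b) ∈ L ↔ a ≠ b ∧ ¬G.Adj a b := by simp [L]
  refine ⟨representingWord k V L, fun v => mem_append_left _ (by simp [V]), fun x y hxy => ?_⟩
  have hperm : V.filter (fun u => u = x ∨ u = y) ~ [x, y] :=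
    (perm_ext_iff_of_nodup ((Finset.nodup_toList _).filter _) (by simp [hxy])).2 (by simp)
  have hswap : (fun u => decide (u = x ∨ u = y)) = (fun u => decide (u = y ∨ u = x)) := by
    simp [or_comm]
  rcases perm_pair.1 hperm with h | h
  · rw [hasPowMatch_filter_representingWord_iff hk hxy h hL, hmem, hmem]
    simp [hxy, hxy.symm, G.adj_comm]
  · rw [hswap] at h ⊢
    rw [hasPowMatch_filter_representingWord_iff hk hxy.symm h hL, hmem, hmem]
    simp [hxy, hxy.symm, G.adj_comm]

/-- For every k ≥ 3, every finite simple graph on {1,…,n} (modeled as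
`Fin n`) is 1^k-representable. -/
theorem stmt_0 (n k : ℕ) (hk : 3 ≤ k) (G : SimpleGraph (Fin n)) :
    ∃ w : List (Fin n), (∀ v : Fin n, v ∈ w) ∧
      ∀ x y : Fin n, x ≠ y →
        (G.Adj x y ↔ ¬ HasPowMatch k (w.filter (fun a => a = x ∨ a = y))) :=
  G.exists_word_adj_iff_not_hasPowMatch hk
end

section
/- If a labeled graph G = ({1,…,n}, E) is 12-representable, then it is 12-representable by a word in which every letter occurs at most twice. -/
/-- A word has no 12-match iff no two consecutive letters form a strictly
increasing pair, i.e. the word is weakly decreasing at each step. -/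
def NoMatch12 (w : List ℕ) : Prop := w.Chain' (fun a b => b ≤ a)

/-- `w` 12-represents the labeled graph with vertex set `V ⊂ ℕ` and edge relation
`E`: every vertex occurs in `w`, all letters of `w` are vertices, and for all
distinct vertices `x, y`: `xy` is an edge iff the subsequence of `w` consisting of
occurrences of `x` and `y` has no 12-match. -/
def Rep12 (V : Finset ℕ) (E : ℕ → ℕ → Prop) (w : List ℕ) : Prop :=
  (∀ v ∈ V, v ∈ w) ∧ (∀ a ∈ w, a ∈ V) ∧
    ∀ x ∈ V, ∀ y ∈ V, x ≠ y →
      (E x y ↔ NoMatch12 (w.filter (fun a => a = x ∨ a = y)))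

/-!
Whether `w` 12-represents a graph depends only on the set of letters of `w` and on which
two-letter words `[x, y]` are subsequences of `w`. If a letter `a` occurs at least three
times, write `w = p ++ a :: q` with `a ∈ p` and `a ∈ q`; deleting that middle `a` keeps
every such subsequence, because an occurrence of `[a, y]` or `[x, a]` through it can be
rerouted through an `a` of `p` or of `q`. Repeating this until every letter occurs at most
twice gives the required word.
-/

open List

namespace List

variable {α : Type*}

theorem pair_sublist_append {p q : List α} {x y : α} (hx : x ∈ p) (hy : y ∈ q) :
    [x, y] <+ p ++ q :=
  (singleton_sublist.2 hx).append (singleton_sublist.2 hy)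

theorem pair_sublist_filter_iff {l : List α} {P : α → Bool} {x y : α} :
    [x, y] <+ l.filter P ↔ P x ∧ P y ∧ [x, y] <+ l := by
  constructor
  · intro h
    have hx := mem_filter.1 (h.subset mem_cons_self)
    have hy := mem_filter.1 (h.subset (mem_cons_of_mem _ mem_cons_self))
    exact ⟨hx.2, hy.2, h.trans filter_sublist⟩
  · rintro ⟨hx, hy, h⟩
    simpa [hx, hy] using h.filter P

theorem pair_sublist_append_cons_iff {p q : List α} {a x y : α} (hp : a ∈ p) (hq : a ∈ q) :
    [x, y] <+ p ++ a :: q ↔ [x, y] <+ p ++ q := by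
  refine ⟨fun h => ?_, fun h => h.trans ((sublist_cons_self a q).append_left p)⟩
  obtain ⟨l₁, l₂, hxy, h₁, h₂⟩ := sublist_append_iff.1 h
  match l₁, l₂, hxy with
  | [], _, rfl =>
    rcases sublist_cons_iff.1 h₂ with h₂ | ⟨_, ⟨rfl, rfl⟩, h₂⟩
    · exact h₂.trans (sublist_append_right p q)
    · exact pair_sublist_append hp (singleton_sublist.1 h₂)
  | [_], _, rfl =>
    have hy : y ∈ q := by
      rcases mem_cons.1 (singleton_sublist.1 h₂) with rfl | hy
      exacts [hq, hy]
    exact pair_sublist_append (singleton_sublist.1 h₁) hy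
  | [_, _], [], rfl => exact h₁.trans (sublist_append_left p q)

variable [DecidableEq α]

theorem exists_eq_append_cons_of_three_le_count {w : List α} {a : α} (h : 3 ≤ w.count a) :
    ∃ p q, w = p ++ a :: q ∧ a ∈ p ∧ a ∈ q := by
  obtain ⟨r₁, r₂, rfl, hr₁, hr₂⟩ := cons_sublist_iff.1 (replicate_sublist_iff.2 h)
  obtain ⟨s₁, s₂, rfl, hs₁, hs₂⟩ := cons_sublist_iff.1 hr₂
  obtain ⟨t₁, t₂, rfl⟩ := append_of_mem hs₁
  exact ⟨r₁ ++ t₁, t₂ ++ s₂, by simp, by simp [hr₁], by simp [singleton_sublist.1 hs₂]⟩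

theorem exists_count_le_two_pair_sublist_iff (w : List α) :
    ∃ u : List α, (∀ a, a ∈ u ↔ a ∈ w) ∧ (∀ x y, [x, y] <+ u ↔ [x, y] <+ w) ∧
      ∀ a, u.count a ≤ 2 := by
  induction hn : w.length using Nat.strong_induction_on generalizing w with
  | _ n ih =>
    by_cases hw : ∀ a, w.count a ≤ 2
    · exact ⟨w, fun _ => Iff.rfl, fun _ _ => Iff.rfl, hw⟩
    obtain ⟨a, ha⟩ := not_forall.1 hw
    obtain ⟨p, q, rfl, hp, hq⟩ :=
      exists_eq_append_cons_of_three_le_count (w := w) (a := a) (by omega)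
    obtain ⟨u, hmem, hpair, hcount⟩ := ih (p ++ q).length (by simp at hn ⊢; omega) (p ++ q) rfl
    refine ⟨u, fun b => ?_, fun x y => ?_, hcount⟩
    · rw [hmem]; simp only [mem_append, mem_cons]; grind
    · rw [hpair, pair_sublist_append_cons_iff hp hq]

end List

theorem noMatch12_iff_forall_pair_sublist {w : List ℕ} :
    NoMatch12 w ↔ ∀ x y, [x, y] <+ w → y ≤ x := by
  have : Trans (fun a b : ℕ => b ≤ a) (fun a b => b ≤ a) (fun a b => b ≤ a) :=
    ⟨fun h₁ h₂ => h₂.trans h₁⟩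
  rw [NoMatch12, Chain', isChain_iff_pairwise, pairwise_iff_forall_sublist]

theorem noMatch12_filter_iff {w : List ℕ} {P : ℕ → Bool} :
    NoMatch12 (w.filter P) ↔ ∀ x y, P x → P y → [x, y] <+ w → y ≤ x := by
  simp only [noMatch12_iff_forall_pair_sublist, pair_sublist_filter_iff, and_imp]

theorem Rep12.of_pair_sublist_iff {V : Finset ℕ} {E : ℕ → ℕ → Prop} {w u : List ℕ}
    (hw : Rep12 V E w) (hmem : ∀ a, a ∈ u ↔ a ∈ w) (hpair : ∀ x y, [x, y] <+ u ↔ [x, y] <+ w) :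
    Rep12 V E u := by
  obtain ⟨hcov, hsub, hedge⟩ := hw
  refine ⟨fun v hv => (hmem v).2 (hcov v hv), fun a ha => hsub a ((hmem a).1 ha),
    fun x hx y hy hxy => ?_⟩
  simp only [hedge x hx y hy hxy, noMatch12_filter_iff, hpair]

/-- a 12-representable labeled graph is 12-representable by a word in
which every letter occurs at most twice. -/
theorem stmt_4 (n : ℕ) (E : ℕ → ℕ → Prop)
    (h : ∃ w, Rep12 (Finset.Icc 1 n) E w) :
    ∃ w, Rep12 (Finset.Icc 1 n) E w ∧ ∀ a : ℕ, w.count a ≤ 2 := by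
  obtain ⟨w, hw⟩ := h
  obtain ⟨u, hmem, hpair, hcount⟩ := exists_count_le_two_pair_sublist_iff w
  exact ⟨u, hw.of_pair_sublist_iff hmem hpair, hcount⟩
end

section
/- If a word w 12-represents a labeled graph G = ({1,…,n}, E) and w contains an occurrence of a letter j strictly between two other occurrences of j (i.e., w = A j B j C with A, C containing no j and some occurrence of j inside B), then the word obtained by deleting all occurrences of j in B still 12-represents G. -/
/-!
A word is free of 12-matches iff it is weakly decreasing. In a weakly decreasing word, every
letter strictly between two occurrences of `j` is squeezed to `j`, so a word `A j B j C` is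
weakly decreasing iff `B` consists of `j`s only and `A j j C` is weakly decreasing — a
condition unchanged by deleting the `j`s of `B`. Restricting the word to two letters `x, y`
commutes with this deletion, and makes it invisible when `j ∉ {x, y}`.
-/

open List

namespace List

variable {α : Type*}

theorem pairwise_append_middle_congr {R : α → α → Prop} {P X Y Q : List α}
    (hX : X.Pairwise R) (hY : Y.Pairwise R) (hXY : ∀ a, a ∈ X ↔ a ∈ Y) :
    (P ++ X ++ Q).Pairwise R ↔ (P ++ Y ++ Q).Pairwise R := by
  simp only [pairwise_append, mem_append, hX, hY, hXY]

end List

section PartialOrder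

variable {α : Type*} [PartialOrder α]

theorem eq_of_mem_of_pairwise_ge {P M Q : List α} {j a : α}
    (h : (P ++ j :: M ++ j :: Q).Pairwise (fun a b => b ≤ a)) (ha : a ∈ M) : a = j := by
  simp only [append_assoc, cons_append, pairwise_append, pairwise_cons, mem_append, mem_cons] at h
  exact le_antisymm (h.2.1.1 a (.inl ha)) (h.2.1.2.2.2 a ha j (.inl rfl))

theorem pairwise_ge_iff_of_between (P M Q : List α) (j : α) :
    (P ++ j :: M ++ j :: Q).Pairwise (fun a b => b ≤ a) ↔
      (∀ a ∈ M, a = j) ∧ (P ++ [j, j] ++ Q).Pairwise (fun a b => b ≤ a) := by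
  have hsqueeze (hM : ∀ a ∈ M, a = j) :
      (P ++ (j :: M ++ [j]) ++ Q).Pairwise (fun a b => b ≤ a) ↔
        (P ++ [j, j] ++ Q).Pairwise (fun a b => b ≤ a) := by
    have hmem : ∀ a, a ∈ j :: M ++ [j] ↔ a = j := fun a =>
      ⟨by simp only [cons_append, mem_cons, mem_append]; grind, by simp_all⟩
    refine pairwise_append_middle_congr ?_ (by simp) fun a => (hmem a).trans (by simp)
    exact pairwise_of_forall_mem_list fun a ha b hb => by rw [(hmem a).mp ha, (hmem b).mp hb]
  simp only [append_assoc, cons_append] at hsqueeze ⊢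
  constructor
  · intro h
    have hM : ∀ a ∈ M, a = j := fun a ha => eq_of_mem_of_pairwise_ge (by simpa using h) ha
    exact ⟨hM, (hsqueeze hM).mp h⟩
  · rintro ⟨hM, h⟩
    exact (hsqueeze hM).mpr h

end PartialOrder

theorem noMatch12_iff_pairwise (w : List ℕ) :
    NoMatch12 w ↔ w.Pairwise (fun a b => b ≤ a) :=
  isChain_iff_pairwise

theorem noMatch12_filter_ne_between_iff (P M Q : List ℕ) (j : ℕ) :
    NoMatch12 (P ++ j :: M.filter (fun a => a ≠ j) ++ j :: Q) ↔
      NoMatch12 (P ++ j :: M ++ j :: Q) := by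
  simp only [noMatch12_iff_pairwise, pairwise_ge_iff_of_between, mem_filter, decide_eq_true_eq]
  refine and_congr_left' ⟨fun h a ha => ?_, fun h a ha => h a ha.1⟩
  by_contra hne
  exact hne (h a ⟨ha, hne⟩)

theorem noMatch12_filter_filter_ne_between_iff (p : ℕ → Bool) (A B C : List ℕ) (j : ℕ) :
    NoMatch12 ((A ++ j :: B.filter (fun a => a ≠ j) ++ j :: C).filter p) ↔
      NoMatch12 ((A ++ j :: B ++ j :: C).filter p) := by
  by_cases hp : p j
  · simp only [filter_append, filter_cons, hp, if_true]
    rw [filter_comm]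
    exact noMatch12_filter_ne_between_iff _ _ _ _
  · have hB : (B.filter (fun a => a ≠ j)).filter p = B.filter p := by
      rw [filter_filter]
      refine filter_congr fun a _ => ?_
      by_cases ha : a = j <;> simp_all
    simp only [filter_append, filter_cons, hp, hB]

theorem mem_filter_ne_between_iff {A B C : List ℕ} {j a : ℕ} :
    a ∈ A ++ j :: B.filter (fun a => a ≠ j) ++ j :: C ↔ a ∈ A ++ j :: B ++ j :: C := by
  by_cases ha : a = j <;> simp [ha]

theorem stmt_5_general (n : ℕ) (E : ℕ → ℕ → Prop) (A B C : List ℕ) (j : ℕ)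
    (h : Rep12 (Finset.Icc 1 n) E (A ++ j :: B ++ j :: C)) :
    Rep12 (Finset.Icc 1 n) E (A ++ j :: (B.filter (fun a => a ≠ j)) ++ j :: C) := by
  obtain ⟨hcover, hletters, hedge⟩ := h
  exact ⟨fun v hv => mem_filter_ne_between_iff.mpr (hcover v hv),
    fun a ha => hletters a (mem_filter_ne_between_iff.mp ha),
    fun x hx y hy hxy => (hedge x hx y hy hxy).trans
      (noMatch12_filter_filter_ne_between_iff _ A B C j).symm⟩

/-- if `w = A j B j C` with `A, C` containing no `j` and some `j`
inside `B`, then deleting all occurrences of `j` in `B` preserves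
12-representation. -/
theorem stmt_5 (n : ℕ) (E : ℕ → ℕ → Prop) (A B C : List ℕ) (j : ℕ)
    (hA : j ∉ A) (hC : j ∉ C) (hB : j ∈ B)
    (h : Rep12 (Finset.Icc 1 n) E (A ++ j :: B ++ j :: C)) :
    Rep12 (Finset.Icc 1 n) E (A ++ j :: (B.filter (fun a => a ≠ j)) ++ j :: C) :=
  stmt_5_general n E A B C j h
end

section
/- For a word w 12-representing G = ({1,…,n}, E) and a letter j, write w = A j B j C where A and C contain no occurrence of j (taking the leftmost and rightmost occurrences of j). Then for any vertex i ≠ j: ij ∈ E if and only if (i < j and all occurrences of i lie in C) or (i > j and all occurrences of i lie in A). -/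
open List

lemma nm_iff (l : List ℕ) : NoMatch12 l ↔ l.Pairwise (fun a b => b ≤ a) := by
  haveI : IsTrans ℕ (fun a b => b ≤ a) := ⟨fun _ _ _ h h' => le_trans h' h⟩
  exact List.isChain_iff_pairwise

/-- writing `w = A j B j C` with the leftmost and rightmost
occurrences of `j` displayed (so `A`, `C` contain no `j`), for any vertex `i ≠ j`:
`ij ∈ E` iff (`i < j` and all occurrences of `i` lie in `C`) or (`i > j` and all
occurrences of `i` lie in `A`). -/
theorem stmt_6 (n : ℕ) (E : ℕ → ℕ → Prop) (A B C : List ℕ) (j : ℕ)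
    (hA : j ∉ A) (hC : j ∉ C) (hj : j ∈ Finset.Icc 1 n)
    (h : Rep12 (Finset.Icc 1 n) E (A ++ j :: B ++ j :: C)) :
    ∀ i ∈ Finset.Icc 1 n, i ≠ j →
      (E i j ↔ (i < j ∧ i ∉ A ∧ i ∉ B) ∨ (j < i ∧ i ∉ B ∧ i ∉ C)) := by
  intro i hi hij
  obtain ⟨-, -, hE⟩ := h
  rw [hE i hi j hj hij]
  set p : ℕ → Prop := fun a => a = i ∨ a = j with hp
  have hfilt : (A ++ j :: B ++ j :: C).filter (fun a => decide (a = i ∨ a = j))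
      = A.filter (fun a => decide (a = i ∨ a = j)) ++
        j :: B.filter (fun a => decide (a = i ∨ a = j)) ++
        j :: C.filter (fun a => decide (a = i ∨ a = j)) := by
    simp [List.filter_append]
  set fA := A.filter (fun a => decide (a = i ∨ a = j)) with hfA
  set fB := B.filter (fun a => decide (a = i ∨ a = j)) with hfB
  set fC := C.filter (fun a => decide (a = i ∨ a = j)) with hfC
  have hAmem : ∀ a ∈ fA, a = i := by
    intro a ha
    rw [hfA, List.mem_filter] at ha
    have := ha.2
    simp at this
    rcases this with h1 | h1
    · exact h1
    · exact absurd (h1 ▸ ha.1) hA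
  have hCmem : ∀ a ∈ fC, a = i := by
    intro a ha
    rw [hfC, List.mem_filter] at ha
    have := ha.2
    simp at this
    rcases this with h1 | h1
    · exact h1
    · exact absurd (h1 ▸ ha.1) hC
  have hBmem : ∀ a ∈ fB, a = i ∨ a = j := by
    intro a ha
    rw [hfB, List.mem_filter] at ha
    simpa using ha.2
  rw [hfilt, nm_iff]
  have pair_rel : ∀ {a b : ℕ} {l : List ℕ}, l.Pairwise (fun a b => b ≤ a) →
      [a, b] <+ l → b ≤ a := by
    intro a b l hPl hs
    have := hPl.sublist hs
    simpa [List.pairwise_cons] using this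
  have hij' := lt_or_gt_of_ne hij
  constructor
  · intro hPW
    rcases hij' with hlt | hgt
    · left
      refine ⟨hlt, ?_, ?_⟩
      · intro hiA
        have hmem : i ∈ fA := by rw [hfA, List.mem_filter]; simp [hiA]
        have hs : [i, j] <+ fA ++ j :: fB ++ j :: fC := by
          have h1 : [i] <+ fA := List.singleton_sublist.mpr hmem
          have h2 : [j] <+ j :: fB ++ j :: fC := List.singleton_sublist.mpr (by simp)
          simpa using h1.append h2
        have := pair_rel hPW hs
        omega
      · intro hiB
        have hmem : i ∈ fB := by rw [hfB, List.mem_filter]; simp [hiB]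
        have hs : [i, j] <+ fA ++ j :: fB ++ j :: fC := by
          have h1 : [i] <+ j :: fB := List.singleton_sublist.mpr (by simp [hmem])
          have h2 : [j] <+ j :: fC := List.singleton_sublist.mpr (by simp)
          have h3 : [i, j] <+ (j :: fB) ++ (j :: fC) := by simpa using h1.append h2
          calc [i, j] <+ (j :: fB) ++ (j :: fC) := h3
            _ <+ fA ++ ((j :: fB) ++ (j :: fC)) := List.sublist_append_right _ _
            _ = fA ++ j :: fB ++ j :: fC := by simp
        have := pair_rel hPW hs
        omega
    · right
      refine ⟨hgt, ?_, ?_⟩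
      · intro hiB
        have hmem : i ∈ fB := by rw [hfB, List.mem_filter]; simp [hiB]
        have hs : [j, i] <+ fA ++ j :: fB ++ j :: fC := by
          have h1 : [j] <+ [j] := List.Sublist.refl _
          have h2 : [i] <+ fB ++ j :: fC := List.singleton_sublist.mpr (by simp [hmem])
          have h3 : [j, i] <+ [j] ++ (fB ++ j :: fC) := h1.append h2
          calc [j, i] <+ [j] ++ (fB ++ j :: fC) := h3
            _ <+ fA ++ ([j] ++ (fB ++ j :: fC)) := List.sublist_append_right _ _
            _ = fA ++ j :: fB ++ j :: fC := by simp
        have := pair_rel hPW hs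
        omega
      · intro hiC
        have hmem : i ∈ fC := by rw [hfC, List.mem_filter]; simp [hiC]
        have hs : [j, i] <+ fA ++ j :: fB ++ j :: fC := by
          have h1 : [j] <+ [j] := List.Sublist.refl _
          have h2 : [i] <+ fB ++ j :: fC := List.singleton_sublist.mpr (by simp [hmem])
          have h3 : [j, i] <+ [j] ++ (fB ++ j :: fC) := h1.append h2
          calc [j, i] <+ [j] ++ (fB ++ j :: fC) := h3
            _ <+ fA ++ ([j] ++ (fB ++ j :: fC)) := List.sublist_append_right _ _
            _ = fA ++ j :: fB ++ j :: fC := by simp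
        have := pair_rel hPW hs
        omega
  · intro hcase
    rcases hcase with ⟨hlt, hiA, hiB⟩ | ⟨hgt, hiB, hiC⟩
    · -- fA = [], fB all j, fC all i
      have hfAnil : fA = [] := by
        rw [hfA, List.filter_eq_nil_iff]
        intro a ha
        simp only [decide_eq_true_eq, not_or]
        exact ⟨fun e => hiA (e ▸ ha), fun e => hA (e ▸ ha)⟩
      have hBj : ∀ a ∈ fB, a = j := by
        intro a ha
        rcases hBmem a ha with e | e
        · exact absurd (e ▸ (List.mem_filter.mp (hfB ▸ ha)).1) hiB
        · exact e
      rw [hfAnil, List.nil_append]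
      have : (j :: fB ++ j :: fC) = (j :: fB ++ [j]) ++ fC := by simp
      rw [this, List.pairwise_append]
      refine ⟨?_, ?_, ?_⟩
      · apply List.pairwise_of_forall_mem_list
        intro a ha b hb
        have ea : a = j := by
          rcases List.mem_append.mp ha with h1 | h1
          · rcases List.mem_cons.mp h1 with h2 | h2
            · exact h2
            · exact hBj a h2
          · simpa using h1
        have eb : b = j := by
          rcases List.mem_append.mp hb with h1 | h1
          · rcases List.mem_cons.mp h1 with h2 | h2
            · exact h2
            · exact hBj b h2
          · simpa using h1
        omega
      · apply List.pairwise_of_forall_mem_list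
        intro a ha b hb
        rw [hCmem a ha, hCmem b hb]
      · intro a ha b hb
        have ea : a = j := by
          rcases List.mem_append.mp ha with h1 | h1
          · rcases List.mem_cons.mp h1 with h2 | h2
            · exact h2
            · exact hBj a h2
          · simpa using h1
        rw [ea, hCmem b hb]
        omega
    · -- fC = [], fB all j, fA all i ≥ j
      have hfCnil : fC = [] := by
        rw [hfC, List.filter_eq_nil_iff]
        intro a ha
        simp only [decide_eq_true_eq, not_or]
        exact ⟨fun e => hiC (e ▸ ha), fun e => hC (e ▸ ha)⟩
      have hBj : ∀ a ∈ fB, a = j := by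
        intro a ha
        rcases hBmem a ha with e | e
        · exact absurd (e ▸ (List.mem_filter.mp (hfB ▸ ha)).1) hiB
        · exact e
      rw [hfCnil]
      rw [List.append_assoc, List.pairwise_append]
      refine ⟨?_, ?_, ?_⟩
      · apply List.pairwise_of_forall_mem_list
        intro a ha b hb
        rw [hAmem a ha, hAmem b hb]
      · apply List.pairwise_of_forall_mem_list
        intro a ha b hb
        have ea : a = j := by
          rcases List.mem_cons.mp ha with h1 | h1
          · exact h1
          · rcases List.mem_append.mp h1 with h2 | h2
            · exact hBj a h2
            · simpa using h2
        have eb : b = j := by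
          rcases List.mem_cons.mp hb with h1 | h1
          · exact h1
          · rcases List.mem_append.mp h1 with h2 | h2
            · exact hBj b h2
            · simpa using h2
        omega
      · intro a ha b hb
        have eb : b = j := by
          rcases List.mem_cons.mp hb with h1 | h1
          · exact h1
          · rcases List.mem_append.mp h1 with h2 | h2
            · exact hBj b h2
            · simpa using h2
        rw [hAmem a ha, eb]
        omega
end

section
/- If a labeled graph G = (V, E) with V ⊂ ℕ contains three vertices i < j < k such that ij ∈ E, jk ∈ E, and ik ∉ E (that is, the induced subgraph on {i,j,k} is a path with endpoints i and k), then G is not 12-representable. -/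
instance : IsTrans ℕ (fun a b => b ≤ a) := ⟨fun _ _ _ h1 h2 => le_trans h2 h1⟩

lemma no_inc_sub {w : List ℕ} {x y : ℕ} (hxy : x < y)
    (h : NoMatch12 (w.filter (fun a => a = x ∨ a = y))) : ¬ List.Sublist [x, y] w := by
  intro hsub
  have h2 : List.Sublist [x, y] (w.filter (fun a => a = x ∨ a = y)) := by
    have := hsub.filter (fun a => a = x ∨ a = y)
    simpa using this
  rw [NoMatch12, List.Chain', List.isChain_iff_pairwise, List.pairwise_iff_forall_sublist] at h
  have := h (a := x) (b := y) h2
  omega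

/-- a labeled graph containing vertices `i < j < k` with the induced
subgraph on them a path with endpoints `i` and `k` (edges `ij`, `jk` and non-edge
`ik`) is not 12-representable. -/
theorem stmt_7 (V : Finset ℕ) (E : ℕ → ℕ → Prop) (hsym : Symmetric E)
    (i j k : ℕ) (hi : i ∈ V) (hj : j ∈ V) (hk : k ∈ V)
    (hij : i < j) (hjk : j < k)
    (e1 : E i j) (e2 : E j k) (e3 : ¬ E i k) :
    ¬ ∃ w, Rep12 V E w := by
  rintro ⟨w, hmem, hsub, hiff⟩
  have hik : i < k := hij.trans hjk
  have Pij := no_inc_sub hij ((hiff i hi j hj hij.ne).mp e1)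
  have Pjk := no_inc_sub hjk ((hiff j hj k hk hjk.ne).mp e2)
  -- from ¬ E i k extract [i,k] <+ w
  have Pik : ¬ NoMatch12 (w.filter (fun a => a = i ∨ a = k)) :=
    fun h => e3 ((hiff i hi k hk hik.ne).mpr h)
  rw [NoMatch12, List.Chain', List.isChain_iff_pairwise, List.pairwise_iff_forall_sublist] at Pik
  push_neg at Pik
  obtain ⟨a, b, habs, hab⟩ := Pik
  have ha : a ∈ w.filter (fun a => a = i ∨ a = k) := habs.subset (by simp)
  have hb : b ∈ w.filter (fun a => a = i ∨ a = k) := habs.subset (by simp)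
  simp only [List.mem_filter, decide_eq_true_eq] at ha hb
  have hai : a = i := by rcases ha.2 with h | h <;> rcases hb.2 with h' | h' <;> omega
  have hbk : b = k := by rcases ha.2 with h | h <;> rcases hb.2 with h' | h' <;> omega
  rw [hai, hbk] at habs
  have hik_sub : List.Sublist [i, k] w := habs.trans (List.filter_sublist (l := w))
  obtain ⟨u, v, rfl⟩ := List.append_of_mem (hmem j hj)
  rw [List.sublist_append_iff] at hik_sub
  obtain ⟨l₁, l₂, heq, h1, h2⟩ := hik_sub
  -- cases on how [i,k] splits
  have : l₁ = [] ∧ l₂ = [i, k] ∨ l₁ = [i] ∧ l₂ = [k] ∨ l₁ = [i, k] ∧ l₂ = [] := by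
    rcases l₁ with _ | ⟨x, _ | ⟨y, _ | _⟩⟩ <;> simp_all <;> omega
  rcases this with ⟨rfl, rfl⟩ | ⟨rfl, rfl⟩ | ⟨rfl, rfl⟩
  · -- [i,k] <+ j :: v ; get [j,k] <+ whole
    have hk' : List.Sublist [k] v := by
      cases h2 with
      | cons _ h => exact (List.sublist_cons_self i [k]).trans h
      | cons_cons _ h => exact h
    exact Pjk (List.sublist_append_of_sublist_right (hk'.cons₂ j))
  · -- i ∈ u, j follows
    exact Pij (List.Sublist.append h1 (by simp))
  · have hi' : List.Sublist [i] u := (by simp : List.Sublist [i] [i,k]).trans h1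
    exact Pij (List.Sublist.append hi' (by simp))
end

section
/- If a labeled graph G = (V, E) with V ⊂ ℕ contains four vertices i, j, k, ℓ with max{i,j} < min{k,ℓ}, such that the only edges among them are ik and jℓ (i.e., ik ∈ E, jℓ ∈ E, and ij, iℓ, jk, kℓ ∉ E), then G is not 12-representable. -/
open List

theorem pair_sublist_cons_iff {α : Type*} {a b x : α} {w : List α} :
    [a, b] <+ x :: w ↔ [a, b] <+ w ∨ x = a ∧ b ∈ w := by
  simp [sublist_cons_iff, eq_comm]

theorem pair_sublist_or_pair_sublist {α : Type*} {a b c d : α} {w : List α}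
    (hab : [a, b] <+ w) (hcd : [c, d] <+ w) : [c, b] <+ w ∨ [a, d] <+ w := by
  induction w with
  | nil => simp at hab
  | cons x w ih =>
    simp only [pair_sublist_cons_iff] at hab hcd ⊢
    have hd : d ∈ w := by
      rcases hcd with hcd | ⟨-, hd⟩
      exacts [hcd.subset (by simp), hd]
    rcases hab with hab | ⟨rfl, -⟩
    · rcases hcd with hcd | ⟨rfl, -⟩
      · exact (ih hab hcd).imp .inl .inl
      · exact .inl (.inr ⟨rfl, hab.subset (by simp)⟩)
    · exact .inr (.inr ⟨rfl, hd⟩)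

theorem noMatch12_filter_iff_not_sublist {x y : ℕ} (hxy : x < y) (w : List ℕ) :
    NoMatch12 (w.filter (fun a => a = x ∨ a = y)) ↔ ¬ [x, y] <+ w := by
  unfold NoMatch12 Chain'
  rw [isChain_iff_pairwise, pairwise_filter, pairwise_iff_forall_sublist]
  simp only [decide_eq_true_eq]
  constructor
  · intro h hsub
    exact absurd (h hsub (.inl rfl) (.inr rfl)) (by omega)
  · rintro h a b hab (rfl | rfl) (rfl | rfl)
    · exact le_rfl
    · exact absurd hab h
    · exact hxy.le
    · exact le_rfl

theorem Rep12.adj_iff_not_sublist {V : Finset ℕ} {E : ℕ → ℕ → Prop} {w : List ℕ}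
    (hw : Rep12 V E w) {x y : ℕ} (hx : x ∈ V) (hy : y ∈ V) (hxy : x < y) :
    E x y ↔ ¬ [x, y] <+ w :=
  (hw.2.2 x hx y hy hxy.ne).trans (noMatch12_filter_iff_not_sublist hxy w)

theorem stmt_8_general (V : Finset ℕ) (E : ℕ → ℕ → Prop)
    (i j k l : ℕ) (hi : i ∈ V) (hj : j ∈ V) (hk : k ∈ V) (hl : l ∈ V)
    (hlt : max i j < min k l)
    (eik : E i k) (ejl : E j l)
    (nil : ¬ E i l) (njk : ¬ E j k) :
    ¬ ∃ w, Rep12 V E w := by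
  rintro ⟨w, hw⟩
  obtain ⟨hik, hil⟩ : i < k ∧ i < l := lt_min_iff.mp ((le_max_left i j).trans_lt hlt)
  obtain ⟨hjk, hjl⟩ : j < k ∧ j < l := lt_min_iff.mp ((le_max_right i j).trans_lt hlt)
  have il_sub : [i, l] <+ w := of_not_not ((hw.adj_iff_not_sublist hi hl hil).not.mp nil)
  have jk_sub : [j, k] <+ w := of_not_not ((hw.adj_iff_not_sublist hj hk hjk).not.mp njk)
  rcases pair_sublist_or_pair_sublist il_sub jk_sub with jl_sub | ik_sub
  · exact (hw.adj_iff_not_sublist hj hl hjl).mp ejl jl_sub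
  · exact (hw.adj_iff_not_sublist hi hk hik).mp eik ik_sub

/-- a labeled graph containing vertices `i, j, k, ℓ` with
`max {i,j} < min {k,ℓ}` whose only edges among them are `ik` and `jℓ` is not
12-representable. -/
theorem stmt_8 (V : Finset ℕ) (E : ℕ → ℕ → Prop) (hsym : Symmetric E)
    (i j k l : ℕ) (hi : i ∈ V) (hj : j ∈ V) (hk : k ∈ V) (hl : l ∈ V)
    (hij : i ≠ j) (hkl : k ≠ l)
    (hlt : max i j < min k l)
    (eik : E i k) (ejl : E j l)
    (nij : ¬ E i j) (nil : ¬ E i l) (njk : ¬ E j k) (nkl : ¬ E k l) :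
    ¬ ∃ w, Rep12 V E w :=
  stmt_8_general V E i j k l hi hj hk hl hlt eik ejl nil njk
end

section
/- If w is a word 12-representing a labeled graph G, then the word obtained from the reverse of w by replacing each letter x with n+1−x (where n is the largest vertex label) 12-represents the supplement graph G̅, where xy is an edge of G̅ if and only if (n+1−x)(n+1−y) is an edge of G. -/
/-! Reversing a word and relabelling it by an order-reversing involution `f` of the vertex set
maps a weakly decreasing subsequence to a weakly decreasing one, so the 12-representation of `G`
is carried to a 12-representation of the graph pulled back along `f`. The supplement is the
case `f x = n + 1 - x` on `{1, …, n}`. -/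

lemma noMatch12_reverse_map_iff {f : ℕ → ℕ} {l : List ℕ}
    (hf : ∀ a ∈ l, ∀ b ∈ l, f a ≤ f b ↔ b ≤ a) :
    NoMatch12 (l.map f).reverse ↔ NoMatch12 l := by
  show List.IsChain _ _ ↔ List.IsChain _ _
  rw [List.isChain_reverse, List.isChain_map]
  exact List.IsChain.iff_of_mem_imp fun a b ha hb => hf a ha b hb

lemma filter_reverse_map {α β : Type*} (f : α → β) (p : β → Bool) (l : List α) :
    (l.reverse.map f).filter p = ((l.filter (p ∘ f)).map f).reverse := by
  rw [← List.map_reverse, List.filter_map, ← List.filter_reverse]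

theorem Rep12.reverse_map {V : Finset ℕ} {E : ℕ → ℕ → Prop} {w : List ℕ} {f : ℕ → ℕ}
    (h : Rep12 V E w) (hmaps : ∀ a ∈ V, f a ∈ V) (hinv : ∀ a ∈ V, f (f a) = a)
    (hanti : ∀ a ∈ V, ∀ b ∈ V, f a ≤ f b ↔ b ≤ a) :
    Rep12 V (fun x y => E (f x) (f y)) (w.reverse.map f) := by
  obtain ⟨hvert, hlet, hedge⟩ := h
  refine ⟨fun v hv => ?_, fun a ha => ?_, fun x hx y hy hxy => ?_⟩
  · exact List.mem_map.2 ⟨f v, List.mem_reverse.2 (hvert _ (hmaps v hv)), hinv v hv⟩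
  · obtain ⟨b, hb, rfl⟩ := List.mem_map.1 ha
    exact hmaps b (hlet b (List.mem_reverse.1 hb))
  · have hfxy : f x ≠ f y := fun he => hxy (by rw [← hinv x hx, he, hinv y hy])
    have hfilter : (w.filter fun a => f a = x ∨ f a = y) =
        w.filter fun a => a = f x ∨ a = f y := by
      refine List.filter_congr fun a ha => ?_
      have hf_eq : ∀ z ∈ V, f a = z ↔ a = f z := fun z hz =>
        ⟨fun he => by rw [← he, hinv a (hlet a ha)], fun he => by rw [he, hinv z hz]⟩
      simp only [hf_eq x hx, hf_eq y hy]
    show E (f x) (f y) ↔ _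
    rw [hedge _ (hmaps x hx) _ (hmaps y hy) hfxy, filter_reverse_map, Function.comp_def,
      hfilter, noMatch12_reverse_map_iff fun a ha b hb =>
      hanti a (hlet a (List.mem_of_mem_filter ha)) b (hlet b (List.mem_of_mem_filter hb))]

/-- if `w` 12-represents `G` on `{1,…,n}`, then reversing `w` and
replacing each letter `x` by `n+1−x` gives a word 12-representing the supplement
graph, in which `x y` is an edge iff `(n+1−x)(n+1−y)` is an edge of `G`. -/
theorem stmt_10 (n : ℕ) (E : ℕ → ℕ → Prop) (w : List ℕ)
    (h : Rep12 (Finset.Icc 1 n) E w) :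
    Rep12 (Finset.Icc 1 n) (fun x y => E (n + 1 - x) (n + 1 - y))
      (w.reverse.map (fun a => n + 1 - a)) := by
  refine h.reverse_map (fun a ha => ?_) (fun a ha => ?_) (fun a ha b hb => ?_) <;>
    simp only [Finset.mem_Icc] at * <;> omega
end

section
/- The cycle graph C_n is not 12-representable for any n ≥ 5: for every labeling of the vertices of C_n by distinct positive integers, no word 12-represents the resulting labeled graph. -/
/-!
In a word, two letters `y < x` are adjacent exactly when no `y` occurs before an `x`. Hence a
descending path `x ~ y ~ z`, `x > y > z`, closes to a triangle, and of two edges `x₁y₁`, `x₂y₂`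
whose upper ends lie above both lower ends, one of `x₁y₂`, `x₂y₁` is an edge. Around the vertex
`m` of largest label on `C_n`, these two rules force the labels of `m - 1, m - 2, m - 3, m + 1,
m + 2` into `ℓ(m - 2) < ℓ(m + 1) < ℓ(m + 2)`; reflecting the cycle through `m` gives
`ℓ(m + 2) < ℓ(m - 2)` as well. For `n ≥ 5` the vertices at distance `2` and `3` are not adjacent,
which is what the two rules need.
-/

namespace List

variable {α : Type*} {l : List α} {a b c d : α}

theorem pair_sublist_iff : [a, b] <+ l ↔ ∃ l₁ l₂, l = l₁ ++ l₂ ∧ a ∈ l₁ ∧ b ∈ l₂ := by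
  simp only [cons_sublist_iff (l := [b]), singleton_sublist]

theorem Sublist.pair_or_pair_of_mem (h : [a, c] <+ l) (hb : b ∈ l) :
    [a, b] <+ l ∨ [b, c] <+ l := by
  obtain ⟨l₁, l₂, rfl, ha, hc⟩ := pair_sublist_iff.1 h
  rcases mem_append.1 hb with hb | hb
  · exact Or.inr (pair_sublist_iff.2 ⟨l₁, l₂, rfl, hb, hc⟩)
  · exact Or.inl (pair_sublist_iff.2 ⟨l₁, l₂, rfl, ha, hb⟩)

theorem Sublist.pair_or_pair (h₁ : [a, b] <+ l) (h₂ : [c, d] <+ l) :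
    [a, d] <+ l ∨ [c, b] <+ l := by
  obtain ⟨l₁, l₂, rfl, ha, hb⟩ := pair_sublist_iff.1 h₁
  obtain ⟨r₁, r₂, hl, hc, hd⟩ := pair_sublist_iff.1 h₂
  rcases append_eq_append_iff.1 hl with ⟨l', rfl, rfl⟩ | ⟨r', rfl, rfl⟩
  · exact Or.inl (pair_sublist_iff.2 ⟨l₁, l' ++ r₂, rfl, ha, mem_append_right _ hd⟩)
  · exact Or.inr (pair_sublist_iff.2 ⟨r₁, r' ++ l₂, append_assoc .., hc, mem_append_right _ hb⟩)

end List

open List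

theorem noMatch12_filter_iff_s12 {w : List ℕ} {x y : ℕ} (hyx : y < x) :
    NoMatch12 (w.filter (fun a => a = x ∨ a = y)) ↔ ¬ [y, x] <+ w := by
  have : IsTrans ℕ (fun a b => b ≤ a) := ⟨fun _ _ _ h₁ h₂ => h₂.trans h₁⟩
  rw [NoMatch12, List.Chain', isChain_iff_pairwise, pairwise_iff_forall_sublist]
  constructor
  · intro h hw
    have := h (by simpa using hw.filter (fun a => decide (a = x ∨ a = y)))
    omega
  · intro h a b hab
    have hmem : ∀ c ∈ [a, b], c = x ∨ c = y := fun c hc => by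
      simpa using (mem_filter.1 (hab.subset hc)).2
    rcases hmem a (by simp) with rfl | rfl <;> rcases hmem b (by simp) with rfl | rfl
    · exact le_rfl
    · exact hyx.le
    · exact absurd (hab.trans filter_sublist) h
    · exact le_rfl

-- The graph that `w` 12-represents on its letters; numbers not occurring in `w` are isolated.
def wordGraph12 (w : List ℕ) : SimpleGraph ℕ where
  Adj x y := x ∈ w ∧ y ∈ w ∧ x ≠ y ∧ NoMatch12 (w.filter (fun a => a = x ∨ a = y))
  symm := ⟨fun _ _ ⟨hx, hy, hxy, h⟩ => ⟨hy, hx, hxy.symm, by simpa only [or_comm] using h⟩⟩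
  loopless := ⟨fun _ h => h.2.2.1 rfl⟩

namespace wordGraph12

variable {w : List ℕ} {a b c d e m x y z x₁ y₁ x₂ y₂ : ℕ}

theorem adj_iff_of_lt (hyx : y < x) :
    (wordGraph12 w).Adj x y ↔ x ∈ w ∧ y ∈ w ∧ ¬ [y, x] <+ w := by
  simp only [wordGraph12, hyx.ne', ne_eq, not_false_eq_true, true_and, noMatch12_filter_iff_s12 hyx]

theorem adj_of_adj_of_adj (hzy : z < y) (hyx : y < x) (hxy : (wordGraph12 w).Adj x y)
    (hyz : (wordGraph12 w).Adj y z) : (wordGraph12 w).Adj x z := by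
  rw [adj_iff_of_lt hyx] at hxy
  rw [adj_iff_of_lt hzy] at hyz
  refine (adj_iff_of_lt (hzy.trans hyx)).2 ⟨hxy.1, hyz.2.1, fun hzx => ?_⟩
  rcases hzx.pair_or_pair_of_mem hxy.2.1 with h | h
  exacts [hyz.2.2 h, hxy.2.2 h]

theorem adj_or_adj_of_adj_of_adj (hyx₁ : y₁ < x₁) (hyx₂ : y₂ < x₂) (hy₂x₁ : y₂ < x₁)
    (hy₁x₂ : y₁ < x₂) (h₁ : (wordGraph12 w).Adj x₁ y₁) (h₂ : (wordGraph12 w).Adj x₂ y₂) :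
    (wordGraph12 w).Adj x₁ y₂ ∨ (wordGraph12 w).Adj x₂ y₁ := by
  rw [adj_iff_of_lt hyx₁] at h₁
  rw [adj_iff_of_lt hyx₂] at h₂
  rw [adj_iff_of_lt hy₂x₁, adj_iff_of_lt hy₁x₂]
  by_contra! h
  rcases (h.1 h₁.1 h₂.2.1).pair_or_pair (h.2 h₂.1 h₁.2.1) with h | h
  exacts [h₂.2.2 h, h₁.2.2 h]

theorem lt_of_path_around_max (hab : (wordGraph12 w).Adj a b) (hbc : (wordGraph12 w).Adj b c)
    (hcm : (wordGraph12 w).Adj c m) (hmd : (wordGraph12 w).Adj m d)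
    (hde : (wordGraph12 w).Adj d e) (hac : ¬ (wordGraph12 w).Adj a c)
    (hma : ¬ (wordGraph12 w).Adj m a) (hmb : ¬ (wordGraph12 w).Adj m b)
    (hbd : ¬ (wordGraph12 w).Adj b d) (hme : ¬ (wordGraph12 w).Adj m e)
    (ha : a ≤ m) (hc : c ≤ m) (hd : d ≤ m) : b < e := by
  replace hc : c < m := hc.lt_of_ne hcm.ne
  replace hd : d < m := hd.lt_of_ne hmd.ne'
  replace ha : a < m := ha.lt_of_ne fun h => hac (h ▸ hcm.symm)
  have hcb : c < b := by
    by_contra! h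
    exact hmb (adj_of_adj_of_adj (h.lt_of_ne hbc.ne) hc hcm.symm hbc.symm)
  have hab' : a < b := by
    by_contra! h
    exact hac (adj_of_adj_of_adj hcb (h.lt_of_ne hab.ne') hab hbc)
  have hbd' : b < d := by
    by_contra! h
    have hdb : d < b := h.lt_of_ne fun h => hmb (h ▸ hmd)
    rcases adj_or_adj_of_adj_of_adj hd hab' ha hdb hmd hab.symm with h | h
    exacts [hma h, hbd h]
  have hde' : d < e := by
    by_contra! h
    exact hme (adj_of_adj_of_adj (h.lt_of_ne hde.ne') hd hmd hde)
  exact hbd'.trans hde'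

end wordGraph12

theorem Rep12.wordGraph12_adj_iff {V : Finset ℕ} {E : ℕ → ℕ → Prop} {w : List ℕ}
    (h : Rep12 V E w) {x y : ℕ} (hx : x ∈ V) (hy : y ∈ V) :
    (wordGraph12 w).Adj x y ↔ x ≠ y ∧ E x y :=
  ⟨fun hxy => ⟨hxy.2.2.1, (h.2.2 x hx y hy hxy.2.2.1).2 hxy.2.2.2⟩,
    fun ⟨hne, hxy⟩ => ⟨h.1 x hx, h.1 y hy, hne, (h.2.2 x hx y hy hne).1 hxy⟩⟩

namespace SimpleGraph

theorem cycleGraph_adj_iff_sub_eq_one {n : ℕ} [NeZero n] (hn : 2 ≤ n) {u v : Fin n} :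
    (cycleGraph n).Adj u v ↔ u - v = 1 ∨ v - u = 1 := by
  obtain ⟨k, rfl⟩ := Nat.exists_eq_add_of_le' hn
  exact cycleGraph_adj

theorem cycleGraph_adj_iff_exists {n : ℕ} [NeZero n] (hn : 2 ≤ n) {u v : Fin n} :
    (cycleGraph n).Adj u v ↔ ∃ i, (u = i ∧ v = i + 1) ∨ (v = i ∧ u = i + 1) := by
  simp [cycleGraph_adj_iff_sub_eq_one hn, sub_eq_iff_eq_add', exists_or, or_comm]

theorem cycleGraph_adj_add_add {n : ℕ} [NeZero n] {m u v : Fin n} :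
    (cycleGraph n).Adj (m + u) (m + v) ↔ (cycleGraph n).Adj u v := by
  simp only [cycleGraph_adj', add_sub_add_left_eq_sub]

theorem cycleGraph_adj_sub_sub {n : ℕ} [NeZero n] {m u v : Fin n} :
    (cycleGraph n).Adj (m - u) (m - v) ↔ (cycleGraph n).Adj u v := by
  simp only [cycleGraph_adj', sub_sub_sub_cancel_left, or_comm]

open Fin.CommRing in
theorem cycleGraph_adj_intCast_intCast {n : ℕ} [NeZero n] {i j : ℤ} (hij : |i - j| + 2 ≤ n) :
    (cycleGraph n).Adj (i : Fin n) (j : Fin n) ↔ |i - j| = 1 := by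
  have hn : 2 ≤ n := by have := abs_nonneg (i - j); omega
  have intCast_eq_one : ∀ k : ℤ, |k - 1| < n → ((k : Fin n) = 1 ↔ k = 1) := by
    intro k hk
    rw [← sub_eq_zero, ← Int.cast_one, ← Int.cast_sub, CharP.intCast_eq_zero_iff (Fin n) n,
      ← sub_eq_zero (a := k)]
    exact ⟨fun h => Int.eq_zero_of_abs_lt_dvd h hk, fun h => h ▸ dvd_zero _⟩
  have hbounds := abs_le.mp (le_refl |i - j|)
  rw [cycleGraph_adj_iff_sub_eq_one hn, ← Int.cast_sub, ← Int.cast_sub,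
    intCast_eq_one _ (abs_lt.mpr ⟨by omega, by omega⟩),
    intCast_eq_one _ (abs_lt.mpr ⟨by omega, by omega⟩), abs_eq zero_le_one]
  omega

end SimpleGraph

open SimpleGraph

open Fin.CommRing in
theorem wordGraph12.apply_neg_two_lt_apply_two {n : ℕ} [NeZero n] (hn : 5 ≤ n) {w : List ℕ}
    {f : Fin n → ℕ} (hf : ∀ i j, (wordGraph12 w).Adj (f i) (f j) ↔ (cycleGraph n).Adj i j)
    (hmax : ∀ i, f i ≤ f 0) : f (-2) < f 2 := by
  have hadj : ∀ i j : ℤ, |i - j| ≤ 3 →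
      ((wordGraph12 w).Adj (f i) (f j) ↔ |i - j| = 1) := fun i j hij => by
    rw [hf, cycleGraph_adj_intCast_intCast (by omega)]
  have h := lt_of_path_around_max (a := f (-3 : ℤ)) (c := f (-1 : ℤ)) (m := f (0 : ℤ))
    (d := f (1 : ℤ))
    ((hadj (-3) (-2) (by norm_num)).2 (by norm_num))
    ((hadj (-2) (-1) (by norm_num)).2 (by norm_num))
    ((hadj (-1) 0 (by norm_num)).2 (by norm_num))
    ((hadj 0 1 (by norm_num)).2 (by norm_num))
    ((hadj 1 2 (by norm_num)).2 (by norm_num))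
    (mt (hadj (-3) (-1) (by norm_num)).1 (by norm_num))
    (mt (hadj 0 (-3) (by norm_num)).1 (by norm_num))
    (mt (hadj 0 (-2) (by norm_num)).1 (by norm_num))
    (mt (hadj (-2) 1 (by norm_num)).1 (by norm_num))
    (mt (hadj 0 2 (by norm_num)).1 (by norm_num))
    (Int.cast_zero (R := Fin n) ▸ hmax _) (Int.cast_zero (R := Fin n) ▸ hmax _)
    (Int.cast_zero (R := Fin n) ▸ hmax _)
  simpa using h

theorem stmt_12_general (n : ℕ) [NeZero n] (hn : 5 ≤ n) (v : Fin n → ℕ)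
    (hv : Function.Injective v) :
    ¬ ∃ w, Rep12 (Finset.image v Finset.univ)
        (fun a b => ∃ i : Fin n,
          (a = v i ∧ b = v (i + 1)) ∨ (b = v i ∧ a = v (i + 1)))
        w := by
  rintro ⟨w, hw⟩
  have hadj : ∀ i j, (wordGraph12 w).Adj (v i) (v j) ↔ (cycleGraph n).Adj i j := fun i j => by
    simp only [hw.wordGraph12_adj_iff (x := v i) (y := v j) (by simp) (by simp), hv.ne_iff,
      hv.eq_iff, ← cycleGraph_adj_iff_exists (by omega : 2 ≤ n)]
    exact ⟨And.right, fun h => ⟨h.ne, h⟩⟩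
  obtain ⟨m, hm⟩ := Finite.exists_max v
  have h₁ := wordGraph12.apply_neg_two_lt_apply_two hn (f := fun i => v (m + i))
    (fun i j => (hadj _ _).trans cycleGraph_adj_add_add) (fun i => by simpa using hm (m + i))
  have h₂ := wordGraph12.apply_neg_two_lt_apply_two hn (f := fun i => v (m - i))
    (fun i j => (hadj _ _).trans cycleGraph_adj_sub_sub) (fun i => by simpa using hm (m - i))
  simp only [sub_neg_eq_add, ← sub_eq_add_neg] at h₁ h₂
  exact lt_asymm h₁ h₂

/-- the cycle `C_n`, `n ≥ 5`, is not 12-representable: for every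
labeling of its vertices by distinct positive integers, no word 12-represents the
resulting labeled graph. -/
theorem stmt_12 (n : ℕ) [NeZero n] (hn : 5 ≤ n) (v : Fin n → ℕ)
    (hv : Function.Injective v) (hpos : ∀ i, 0 < v i) :
    ¬ ∃ w, Rep12 (Finset.image v Finset.univ)
        (fun a b => ∃ i : Fin n,
          (a = v i ∧ b = v (i + 1)) ∨ (b = v i ∧ a = v (i + 1)))
        w :=
  stmt_12_general n hn v hv
end

section
/- If a word w 12-represents a labeled cycle C_n (n ≥ 5) with vertices labeled v₀ = 1, v₁, …, v_{n−1} in cyclic order, then the sequence of labels must alternate: 1 < v₁ > v₂ < v₃ > ⋯, i.e., consecutive labels around the cycle alternately rise and fall. In particular, C_n with n odd and n ≥ 5 admits no 12-representation. -/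
/-!
A word 12-represents `x, y` as non-adjacent exactly when some occurrence of the smaller letter
precedes an occurrence of the larger one. Hence in an induced path `a - b - c` the middle label
`b` cannot lie strictly between `a` and `c`: an `a` before a `c` would have a `b` either after
it or before that `c`. Every vertex of a cycle of length at least four is the middle of such a
path, so every label is a local extremum along the cycle, and starting from the minimal label
`v 0 = 1` the labels must zigzag. Going once around an odd cycle would then force `v (n - 1)`
below `v 0`.
-/

theorem noMatch12_filter_iff_s13 (p : ℕ → Bool) (w : List ℕ) :
    NoMatch12 (w.filter p) ↔ ∀ (i j : ℕ) (hi : i < w.length) (hj : j < w.length),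
      i < j → p w[i] → p w[j] → w[j] ≤ w[i] := by
  have : IsTrans ℕ (fun a b => b ≤ a) := ⟨fun _ _ _ h₁ h₂ => h₂.trans h₁⟩
  rw [NoMatch12, List.Chain', List.isChain_iff_pairwise, List.pairwise_filter,
    List.pairwise_iff_getElem]

namespace Rep12

variable {V : Finset ℕ} {E : ℕ → ℕ → Prop} {w : List ℕ}

theorem symm (h : Rep12 V E w) {x y : ℕ} (hx : x ∈ V) (hy : y ∈ V) (hxy : x ≠ y)
    (e : E x y) : E y x := by
  rw [h.2.2 y hy x hx hxy.symm]
  simpa only [or_comm] using (h.2.2 x hx y hy hxy).mp e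

theorem trans_of_lt (h : Rep12 V E w) {x y z : ℕ} (hx : x ∈ V) (hy : y ∈ V) (hz : z ∈ V)
    (hxy : x < y) (hyz : y < z) (exy : E x y) (eyz : E y z) : E x z := by
  obtain ⟨hall, -, hiff⟩ := h
  have H₁ := (noMatch12_filter_iff_s13 _ _).mp ((hiff x hx y hy hxy.ne).mp exy)
  have H₂ := (noMatch12_filter_iff_s13 _ _).mp ((hiff y hy z hz hyz.ne).mp eyz)
  refine (hiff x hx z hz (hxy.trans hyz).ne).mpr ((noMatch12_filter_iff_s13 _ _).mpr ?_)
  intro i j hi hj hij pi pj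
  simp only [decide_eq_true_eq] at pi pj H₁ H₂
  obtain ⟨k, hk, hky⟩ := List.mem_iff_getElem.mp (hall y hy)
  rcases pi with pix | piz
  · rcases pj with pjx | pjz
    · omega
    · rcases lt_or_ge i k with hik | hki
      · have := H₁ i k hi hk hik (Or.inl pix) (Or.inr hky)
        omega
      · have hkj : k < j := lt_of_le_of_lt hki hij
        have := H₂ k j hk hj hkj (Or.inl hky) (Or.inr pjz)
        omega
  · rcases pj with pjx | pjz <;> omega

theorem lt_iff_lt_of_induced_path (h : Rep12 V E w) {a b c : ℕ} (ha : a ∈ V) (hb : b ∈ V)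
    (hc : c ∈ V) (hab : a ≠ b) (hcb : c ≠ b) (eab : E a b) (ebc : E b c) (hac : ¬E a c) :
    b < a ↔ b < c := by
  constructor
  · intro hba
    by_contra hbc
    have hcb' : c < b := lt_of_le_of_ne (not_lt.mp hbc) hcb
    have eca := h.trans_of_lt hc hb ha hcb' hba (h.symm hb hc hcb.symm ebc)
      (h.symm ha hb hab eab)
    exact hac (h.symm hc ha (hcb'.trans hba).ne eca)
  · intro hbc
    by_contra hba
    have hab' : a < b := lt_of_le_of_ne (not_lt.mp hba) hab
    exact hac (h.trans_of_lt ha hb hc hab' hbc eab ebc)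

end Rep12

theorem lt_add_one_iff_even_of_zigzag {α : Type*} [LinearOrder α] {u : ℕ → α}
    (hne : ∀ k, u k ≠ u (k + 1)) (hext : ∀ k, u (k + 1) < u k ↔ u (k + 1) < u (k + 2))
    (h01 : u 0 < u 1) (k : ℕ) : u k < u (k + 1) ↔ Even k := by
  induction k with
  | zero => simp [h01]
  | succ k ih =>
    rw [Nat.even_add_one, ← ih, not_lt, (hne k).symm.le_iff_lt]
    exact (hext k).symm

def labeledCycleAdj (n : ℕ) (v : ℕ → ℕ) (a b : ℕ) : Prop :=
  ∃ t < n, (a = v t ∧ b = v ((t + 1) % n)) ∨ (b = v t ∧ a = v ((t + 1) % n))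

section LabeledCycle

variable {n : ℕ} {v : ℕ → ℕ}

theorem label_mod_eq_iff (hn : 0 < n) (hv : Set.InjOn v (Set.Iio n)) (i j : ℕ) :
    v (i % n) = v (j % n) ↔ i ≡ j [MOD n] :=
  hv.eq_iff (Nat.mod_lt _ hn) (Nat.mod_lt _ hn)

theorem label_mod_ne_succ (hn : 2 ≤ n) (hv : Set.InjOn v (Set.Iio n)) (k : ℕ) :
    v (k % n) ≠ v ((k + 1) % n) := by
  rw [Ne, label_mod_eq_iff (by omega) hv]
  intro h
  have h01 : 0 ≡ 1 [MOD n] := Nat.ModEq.add_left_cancel' k h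
  have := h01.eq_of_lt_of_lt (by omega) (by omega)
  omega

theorem labeledCycleAdj_iff (hn : 0 < n) (hv : Set.InjOn v (Set.Iio n)) (i j : ℕ) :
    labeledCycleAdj n v (v (i % n)) (v (j % n)) ↔ j ≡ i + 1 [MOD n] ∨ i ≡ j + 1 [MOD n] := by
  have hmod := label_mod_eq_iff hn hv
  have hvt : ∀ t < n, v t = v (t % n) := fun t ht => by rw [Nat.mod_eq_of_lt ht]
  constructor
  · rintro ⟨t, ht, ⟨hi, hj⟩ | ⟨hj, hi⟩⟩
    · rw [hvt t ht, hmod] at hi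
      rw [hmod] at hj
      exact Or.inl (hj.trans (hi.add_right 1).symm)
    · rw [hvt t ht, hmod] at hj
      rw [hmod] at hi
      exact Or.inr (hi.trans (hj.add_right 1).symm)
  · rintro (h | h)
    · exact ⟨i % n, Nat.mod_lt _ hn, Or.inl ⟨rfl, by rw [Nat.mod_add_mod, hmod]; exact h⟩⟩
    · exact ⟨j % n, Nat.mod_lt _ hn, Or.inr ⟨rfl, by rw [Nat.mod_add_mod, hmod]; exact h⟩⟩

theorem Rep12.labeledCycle_lt_iff_lt (hn : 4 ≤ n) (hv : Set.InjOn v (Set.Iio n)) {w : List ℕ}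
    (hrep : Rep12 ((Finset.range n).image v) (labeledCycleAdj n v) w) (k : ℕ) :
    v ((k + 1) % n) < v (k % n) ↔ v ((k + 1) % n) < v ((k + 2) % n) := by
  have hmem : ∀ i, v (i % n) ∈ (Finset.range n).image v := fun i =>
    Finset.mem_image_of_mem v (Finset.mem_range.mpr (Nat.mod_lt _ (by omega)))
  have hadj := labeledCycleAdj_iff (v := v) (by omega) hv
  refine hrep.lt_iff_lt_of_induced_path (hmem k) (hmem (k + 1)) (hmem (k + 2))
    (label_mod_ne_succ (by omega) hv k) (label_mod_ne_succ (by omega) hv (k + 1)).symm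
    ((hadj _ _).mpr (Or.inl rfl)) ((hadj _ _).mpr (Or.inl rfl)) ?_
  rw [hadj]
  rintro (h | h)
  · have h21 : 2 ≡ 1 [MOD n] := Nat.ModEq.add_left_cancel' k h
    have := h21.eq_of_lt_of_lt (by omega) (by omega)
    omega
  · have h03 : 0 ≡ 3 [MOD n] := Nat.ModEq.add_left_cancel' k h
    have := h03.eq_of_lt_of_lt (by omega) (by omega)
    omega

end LabeledCycle

/-- if a word 12-represents a labeled cycle `C_n` (`n ≥ 5`) with
vertices labeled `v 0 = 1, v 1, …, v (n−1)` in cyclic order by distinct positive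
integers, then the labels alternate: `1 < v 1 > v 2 < v 3 > ⋯` and
`v (n−1) > v 0`; in particular `n` cannot be odd. -/
theorem stmt_13 (n : ℕ) (hn : 5 ≤ n) (v : ℕ → ℕ)
    (hv : ∀ a < n, ∀ b < n, v a = v b → a = b)
    (hpos : ∀ i < n, 0 < v i) (h0 : v 0 = 1)
    (w : List ℕ)
    (hrep : Rep12 (Finset.image v (Finset.range n))
      (fun a b => ∃ t < n,
        (a = v t ∧ b = v ((t + 1) % n)) ∨ (b = v t ∧ a = v ((t + 1) % n)))
      w) :
    (∀ t, t + 1 < n → (Even t → v t < v (t + 1)) ∧ (Odd t → v (t + 1) < v t)) ∧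
      v 0 < v (n - 1) ∧ ¬ Odd n := by
  have hinj : Set.InjOn v (Set.Iio n) := fun a ha b hb => hv a ha b hb
  have hu : ∀ k < n, v (k % n) = v k := fun k hk => by rw [Nat.mod_eq_of_lt hk]
  have hmin : ∀ i < n, i ≠ 0 → v 0 < v i := fun i hi hi0 =>
    h0 ▸ lt_of_le_of_ne (hpos i hi) fun h => hi0 (hv i hi 0 (by omega) (h0 ▸ h).symm)
  have hzig := lt_add_one_iff_even_of_zigzag (u := fun k => v (k % n))
    (label_mod_ne_succ (by omega) hinj) (hrep.labeledCycle_lt_iff_lt (by omega) hinj)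
    (by simpa only [hu 0 (by omega), hu 1 (by omega)] using hmin 1 (by omega) one_ne_zero)
  have halt : ∀ t, t + 1 < n → (v t < v (t + 1) ↔ Even t) := fun t ht => by
    simpa only [hu t (by omega), hu (t + 1) ht] using hzig t
  refine ⟨fun t ht => ⟨(halt t ht).mpr, fun hodd => ?_⟩, hmin (n - 1) (by omega) (by omega),
    fun hodd => ?_⟩
  · refine lt_of_le_of_ne (not_lt.mp ((halt t ht).not.mpr (Nat.not_even_iff_odd.mpr hodd))) ?_
    exact fun h => by have := hv _ ht _ (by omega) h; omega
  · have hwrap := (hzig (n - 1)).mpr (Nat.Odd.sub_odd hodd odd_one)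
    simp only [Nat.sub_add_cancel (by omega : 1 ≤ n), Nat.mod_self, hu (n - 1) (by omega)] at hwrap
    exact lt_asymm hwrap (hmin (n - 1) (by omega) (by omega))
end

section
/- If G = ({1,…,n}, E) is a 12-representable labeled graph, then G is a comparability graph: orienting each edge ab with a < b from a to b yields a transitive orientation, i.e., if a < b < c with ab ∈ E and bc ∈ E then ac ∈ E. -/
/-!
For `x < y`, the edge `xy` is present iff `x` never occurs before `y` in the word, i.e. iff
`[x, y]` is not a subsequence of it. If `a < b < c` and `[a, c]` were a subsequence, the
occurrence of `b` would put either `[a, b]` or `[b, c]` into the word, so one of the edges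
`ab`, `bc` would be missing.
-/

theorem List.pair_sublist_append_s14 {α : Type*} {x y : α} {r₁ r₂ : List α}
    (hx : x ∈ r₁) (hy : y ∈ r₂) : [x, y].Sublist (r₁ ++ r₂) :=
  (List.singleton_sublist.mpr hx).append (List.singleton_sublist.mpr hy)

theorem List.Sublist.pair_or_pair_of_mem_s14 {α : Type*} {a b c : α} {w : List α}
    (hac : [a, c].Sublist w) (hb : b ∈ w) : [a, b].Sublist w ∨ [b, c].Sublist w := by
  obtain ⟨r₁, r₂, rfl, ha, hc⟩ := List.cons_sublist_iff.mp hac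
  rcases List.mem_append.mp hb with hb | hb
  · exact .inr (List.pair_sublist_append_s14 hb (List.singleton_sublist.mp hc))
  · exact .inl (List.pair_sublist_append_s14 ha hb)

theorem noMatch12_filter_pair_iff {x y : ℕ} (hxy : x < y) (w : List ℕ) :
    NoMatch12 (w.filter (fun a => a = x ∨ a = y)) ↔ ¬ [x, y].Sublist w := by
  have : Trans (fun a b : ℕ => b ≤ a) (fun a b => b ≤ a) (fun a b => b ≤ a) :=
    ⟨fun hab hbc => le_trans hbc hab⟩
  rw [NoMatch12, List.Chain', List.isChain_iff_pairwise, List.pairwise_iff_forall_sublist]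
  constructor
  · intro hdecr hsub
    have hfilter := hsub.filter (fun a => decide (a = x ∨ a = y))
    simp only [List.filter, decide_true, true_or, or_true] at hfilter
    exact absurd (hdecr hfilter) (not_le.mpr hxy)
  · intro hnot u v huv
    have hu := List.of_mem_filter (huv.subset (by simp : u ∈ [u, v]))
    have hv := List.of_mem_filter (huv.subset (by simp : v ∈ [u, v]))
    simp only [decide_eq_true_eq] at hu hv
    rcases hu with rfl | rfl <;> rcases hv with rfl | rfl
    · exact le_rfl
    · exact absurd (huv.trans List.filter_sublist) hnot
    · exact hxy.le
    · exact le_rfl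

theorem stmt_14_general (n : ℕ) (E : ℕ → ℕ → Prop)
    (h : ∃ w, Rep12 (Finset.Icc 1 n) E w) :
    ∀ a ∈ Finset.Icc 1 n, ∀ b ∈ Finset.Icc 1 n, ∀ c ∈ Finset.Icc 1 n,
      a < b → b < c → E a b → E b c → E a c := by
  obtain ⟨w, hall, -, hrep⟩ := h
  intro a ha b hb c hc hab hbc hEab hEbc
  have hnot_ab := (noMatch12_filter_pair_iff hab w).mp ((hrep a ha b hb hab.ne).mp hEab)
  have hnot_bc := (noMatch12_filter_pair_iff hbc w).mp ((hrep b hb c hc hbc.ne).mp hEbc)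
  refine (hrep a ha c hc (hab.trans hbc).ne).mpr
    ((noMatch12_filter_pair_iff (hab.trans hbc) w).mpr fun hac => ?_)
  rcases hac.pair_or_pair_of_mem_s14 (hall b hb) with hsub | hsub
  · exact hnot_ab hsub
  · exact hnot_bc hsub

/-- every 12-representable labeled graph on `{1,…,n}` is a
comparability graph: orienting each edge from its smaller to its larger endpoint
is a transitive orientation. -/
theorem stmt_14 (n : ℕ) (E : ℕ → ℕ → Prop) (hsym : Symmetric E)
    (h : ∃ w, Rep12 (Finset.Icc 1 n) E w) :
    ∀ a ∈ Finset.Icc 1 n, ∀ b ∈ Finset.Icc 1 n, ∀ c ∈ Finset.Icc 1 n,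
      a < b → b < c → E a b → E b c → E a c :=
  stmt_14_general n E h
end
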